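/- Let w = (d₁,…,d_l,…,d_N) and w̃ = (d₁,…,d̃_l,…,d_N) with d̃_l ≤ d_l (all other entries equal), and let μ and μ̃ be the reflector measures of the discrete reflectors σ_w and σ_{w̃} respectively. Then μ̃(P_i) ≤ μ(P_i) for every i ≠ l. -/

import Mathlib

noncomputable section

open MeasureTheory Metric Set Filter Topology
attribute [local instance] Classical.propDecidable

/-- Real inner product on `ℝ³`. -/
noncomputable def rinner (x y : EuclideanSpace ℝ (Fin 3)) : ℝ := inner ℝ x y

/-- Euclidean 3-space. -/
abbrev E3 : Type := EuclideanSpace ℝ (Fin 3)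

/-- The unit sphere `S²` in `ℝ³`. -/
def sphere2 : Set E3 := Metric.sphere (0 : E3) 1

/-- Unit vector `m = P/OP` in the direction of `P`. -/
noncomputable def axisDir (P : E3) : E3 := ‖P‖⁻¹ • P

/-- Eccentricity `ε = √(1 + d²/OP²) − d/OP` of the ellipsoid `E_d(P)`. -/
noncomputable def ecc (P : E3) (d : ℝ) : ℝ :=
  Real.sqrt (1 + d ^ 2 / ‖P‖ ^ 2) - d / ‖P‖

/-- Polar radius `ρ_d(x) = d/(1 − ε x·m)` of the ellipsoid `E_d(P)`. -/
noncomputable def polarRadius (P : E3) (d : ℝ) (x : E3) : ℝ :=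
  d / (1 - ecc P d * rinner x (axisDir P))

/-- The constant `c_δ = √(1 + δ²) − δ`. -/
noncomputable def cconst (δ : ℝ) : ℝ := Real.sqrt (1 + δ ^ 2) - δ

/-- Outer unit normal `(x − εm)/|x − εm|` of the ellipsoid `E_d(P)` at the point `ρ_d(x)x`. -/
noncomputable def normalVec (P : E3) (d : ℝ) (x : E3) : E3 :=
  ‖x - ecc P d • axisDir P‖⁻¹ • (x - ecc P d • axisDir P)

/-- The ellipsoid `E_d(P)` supports the surface `{ρ(x)x : x ∈ closure Ω}` at `ρ(x₀)x₀`. -/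
def IsSupportingAt (Ω : Set E3) (ρ : E3 → ℝ) (P : E3) (d : ℝ) (x₀ : E3) : Prop :=
  P ≠ 0 ∧ 0 < d ∧ (∀ x ∈ closure Ω, ρ x ≤ polarRadius P d x) ∧
    ρ x₀ = polarRadius P d x₀

/-- `{ρ(x)x : x ∈ closure Ω}` is a reflector from `closure Ω` to the target `D`. -/
def IsReflector (Ω D : Set E3) (ρ : E3 → ℝ) : Prop :=
  (∀ x ∈ closure Ω, 0 < ρ x) ∧
  ∀ x₀ ∈ closure Ω, ∃ P ∈ D, ∃ d : ℝ, IsSupportingAt Ω ρ P d x₀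

/-- Tracing set `τ_σ(E)`: directions reflected into `E`. -/
def tracing (Ω : Set E3) (ρ : E3 → ℝ) (E : Set E3) : Set E3 :=
  {x | x ∈ closure Ω ∧ ∃ P ∈ E, ∃ d : ℝ, IsSupportingAt Ω ρ P d x}

/-- The class `A(δ)`: reflectors all of whose points admit a supporting ellipsoid with
`d ≥ δ M`. -/
def InClassA (Ω D : Set E3) (ρ : E3 → ℝ) (δ M : ℝ) : Prop :=
  IsReflector Ω D ρ ∧
  ∀ x₀ ∈ closure Ω, ∃ P ∈ D, ∃ d : ℝ, δ * M ≤ d ∧ IsSupportingAt Ω ρ P d x₀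

/-- The boundary `∂Ω` of `Ω` relative to the sphere `S²`. -/
def sphFrontier (Ω : Set E3) : Set E3 := closure Ω ∩ closure (sphere2 \ Ω)

/-- `D` is contained in a plane of `ℝ³`. -/
def InPlane (D : Set E3) : Prop :=
  ∃ v : E3, v ≠ 0 ∧ ∃ c : ℝ, ∀ P ∈ D, rinner P v = c

/-- The set `S` of directions traced to two distinct target points. -/
def ambigSet (Ω D : Set E3) (ρ : E3 → ℝ) : Set E3 :=
  {x | x ∈ closure Ω ∧ ∃ P₁ ∈ D, ∃ P₂ ∈ D, P₁ ≠ P₂ ∧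
    x ∈ tracing Ω ρ {P₁} ∧ x ∈ tracing Ω ρ {P₂}}

/-- A canonical selection of the outer unit normal `ν(x)` of the reflector; at every point
where the supporting ellipsoid is unique (a.e. point) this is the normal of the
supporting ellipsoid. -/
noncomputable def nuSel (Ω D : Set E3) (ρ : E3 → ℝ) (x : E3) : E3 :=
  if h : ∃ p : E3 × ℝ, p.1 ∈ D ∧ IsSupportingAt Ω ρ p.1 p.2 x then
    normalVec h.choose.1 h.choose.2 x
  else 0

/-- A canonical selection of the reflector map `𝒩_σ(x)`; at every point with a unique
supporting ellipsoid (a.e. point) this is the target point the ray `x` is reflected to. -/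
noncomputable def reflMapSel (Ω D : Set E3) (ρ : E3 → ℝ) (x : E3) : E3 :=
  if h : ∃ p : E3 × ℝ, p.1 ∈ D ∧ IsSupportingAt Ω ρ p.1 p.2 x then h.choose.1 else 0

/-- The reflector measure `μ(E) = ∫_{τ_σ(E)} f(x) (x·ν(x))/ρ(x)² dx`,
the irradiance received on `E ⊆ D`. -/
noncomputable def reflMeasure (Ω D : Set E3) (ρ f : E3 → ℝ) (E : Set E3) : ℝ :=
  ∫ x in tracing Ω ρ E, f x * rinner x (nuSel Ω D ρ x) / ρ x ^ 2 ∂μH[2]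

/-- Polar radius of the discrete reflector given by `w = (d₁,…,d_N)`:
`ρ_w(x) = min_i ρ_{d_i}(x)`. -/
noncomputable def discRho {N : ℕ} (P : Fin N → E3) (w : Fin N → ℝ) (x : E3) : ℝ :=
  ⨅ i, polarRadius (P i) (w i) x

/-- Tracing set of the discrete reflector: directions reflected to some `P_i`, `i ∈ I`. -/
def discTracing {N : ℕ} (Ω : Set E3) (P : Fin N → E3) (w : Fin N → ℝ)
    (I : Set (Fin N)) : Set E3 :=
  {x | x ∈ closure Ω ∧ ∃ i ∈ I, discRho P w x = polarRadius (P i) (w i) x}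

/-- Canonical selection of the outer unit normal of the discrete reflector; at every
point where the minimum is attained at a unique `i` (a.e. point) it is the normal of
the supporting ellipsoid `E_{d_i}(P_i)`. -/
noncomputable def discNu {N : ℕ} (P : Fin N → E3) (w : Fin N → ℝ) (x : E3) : E3 :=
  if h : ∃ i, discRho P w x = polarRadius (P i) (w i) x then
    normalVec (P h.choose) (w h.choose) x
  else 0

/-- Reflector measure of the discrete reflector:
`μ_w({P_i : i ∈ I}) = ∫_{τ_{σ_w}(I)} f(x)(x·ν_w(x))/ρ_w(x)² dx`. -/
noncomputable def discMu {N : ℕ} (Ω : Set E3) (P : Fin N → E3) (w : Fin N → ℝ)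
    (f : E3 → ℝ) (I : Set (Fin N)) : ℝ :=
  ∫ x in discTracing Ω P w I, f x * rinner x (discNu P w x) / discRho P w x ^ 2 ∂μH[2]

/-! Lowering `d_l` only shrinks the ellipsoid `E_{d_l}(P_l)` (the polar radius `ρ_d` grows with
`d`), so `ρ_{w̃} ≤ ρ_w` while both reflectors contain the ellipsoid `E_{d_i}(P_i)`: every direction
that `σ_{w̃}` sends to `P_i` is also sent to `P_i` by `σ_w`. Two distinct confocal ellipsoids meet
over a plane section of the sphere of directions, a `μH[2]`-null circle; off these ties the
integrands of both measures at `P_i` equal the nonnegative weight of `E_{d_i}(P_i)`, which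
`μ̃(P_i)` integrates over a smaller set than `μ(P_i)`. -/

open scoped RealInnerProductSpace
open Module

theorem abs_mul_sqrt_sub_mul_sqrt_le {q q' : ℝ} (hq' : 0 < q') (hqq' : q' ≤ q) :
    |q * √(1 + q' ^ 2) - q' * √(1 + q ^ 2)| ≤ q - q' := by
  have ha : √(1 + q ^ 2) ^ 2 = 1 + q ^ 2 := Real.sq_sqrt (by positivity)
  have hb : √(1 + q' ^ 2) ^ 2 = 1 + q' ^ 2 := Real.sq_sqrt (by positivity)
  have ha1 : 1 ≤ √(1 + q ^ 2) := Real.one_le_sqrt.2 (by nlinarith)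
  have hb1 : 1 ≤ √(1 + q' ^ 2) := Real.one_le_sqrt.2 (by nlinarith)
  have hprod : (q * √(1 + q' ^ 2) - q' * √(1 + q ^ 2)) * (q * √(1 + q' ^ 2) + q' * √(1 + q ^ 2))
      = (q - q') * (q + q') := by linear_combination q ^ 2 * hb - q' ^ 2 * ha
  have hsum : q + q' ≤ q * √(1 + q' ^ 2) + q' * √(1 + q ^ 2) := by nlinarith
  rw [abs_le]
  constructor <;> nlinarith

theorem ecc_pos (P : E3) (d : ℝ) : 0 < ecc P d := by
  rw [ecc, ← div_pow, sub_pos]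
  refine (le_abs_self _).trans_lt ((Real.lt_sqrt (abs_nonneg _)).2 ?_)
  rw [sq_abs]
  linarith

theorem ecc_lt_one {P : E3} {d : ℝ} (hP : P ≠ 0) (hd : 0 < d) : ecc P d < 1 := by
  have hq : 0 < d / ‖P‖ := div_pos hd (norm_pos_iff.2 hP)
  rw [ecc, ← div_pow, sub_lt_iff_lt_add, Real.sqrt_lt' (by linarith)]
  nlinarith

theorem ecc_sq_add_two_mul_ecc_mul (P : E3) (d : ℝ) :
    ecc P d ^ 2 + 2 * ecc P d * (d / ‖P‖) = 1 := by
  have h : √(1 + (d / ‖P‖) ^ 2) ^ 2 = 1 + (d / ‖P‖) ^ 2 := Real.sq_sqrt (by positivity)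
  rw [ecc, ← div_pow]
  linear_combination h

theorem norm_axisDir_le_one (P : E3) : ‖axisDir P‖ ≤ 1 := by
  rcases eq_or_ne P 0 with rfl | hP
  · simp [axisDir]
  · exact (norm_smul_inv_norm hP).le

theorem abs_rinner_axisDir_le_one (P : E3) {x : E3} (hx : ‖x‖ ≤ 1) :
    |rinner x (axisDir P)| ≤ 1 :=
  (abs_real_inner_le_norm _ _).trans (mul_le_one₀ hx (norm_nonneg _) (norm_axisDir_le_one P))

theorem one_sub_ecc_mul_rinner_axisDir_pos {P x : E3} {d : ℝ} (hP : P ≠ 0) (hd : 0 < d)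
    (hx : ‖x‖ ≤ 1) : 0 < 1 - ecc P d * rinner x (axisDir P) := by
  have ht := abs_le.1 (abs_rinner_axisDir_le_one P hx)
  nlinarith [ecc_pos P d, ecc_lt_one hP hd]

theorem polarRadius_pos {P x : E3} {d : ℝ} (hP : P ≠ 0) (hd : 0 < d) (hx : ‖x‖ ≤ 1) :
    0 < polarRadius P d x :=
  div_pos hd (one_sub_ecc_mul_rinner_axisDir_pos hP hd hx)

theorem polarRadius_le_polarRadius {P x : E3} {d d' : ℝ} (hP : P ≠ 0) (hd' : 0 < d')
    (hdd' : d' ≤ d) (hx : ‖x‖ ≤ 1) : polarRadius P d' x ≤ polarRadius P d x := by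
  have hd : 0 < d := hd'.trans_le hdd'
  have hPpos : 0 < ‖P‖ := norm_pos_iff.2 hP
  rw [polarRadius, polarRadius, div_le_div_iff₀ (one_sub_ecc_mul_rinner_axisDir_pos hP hd' hx)
    (one_sub_ecc_mul_rinner_axisDir_pos hP hd hx), ecc, ecc, ← div_pow, ← div_pow]
  set t := rinner x (axisDir P)
  set q := d / ‖P‖
  set q' := d' / ‖P‖
  have hq' : d' = ‖P‖ * q' := by simp only [q']; field_simp
  have hq : d = ‖P‖ * q := by simp only [q]; field_simp
  have hkey : (q * √(1 + q' ^ 2) - q' * √(1 + q ^ 2)) * t ≤ q - q' := by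
    refine (le_abs_self _).trans ?_
    rw [abs_mul]
    exact mul_le_of_le_one_right (abs_nonneg _) (abs_rinner_axisDir_le_one P hx) |>.trans
      (abs_mul_sqrt_sub_mul_sqrt_le (by positivity) (div_le_div_of_nonneg_right hdd' hPpos.le))
  rw [hq, hq']
  nlinarith

theorem mem_sphere2_iff {x : E3} : x ∈ sphere2 ↔ ‖x‖ = 1 := mem_sphere_zero_iff_norm

theorem rinner_sub_ecc_smul_axisDir {P x : E3} (d : ℝ) (hx : ‖x‖ = 1) :
    rinner x (x - ecc P d • axisDir P) = 1 - ecc P d * rinner x (axisDir P) := by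
  rw [rinner, inner_sub_right, real_inner_self_eq_norm_sq, hx, real_inner_smul_right, one_pow,
    rinner]

theorem sub_ecc_smul_axisDir_ne_zero {P x : E3} {d : ℝ} (hP : P ≠ 0) (hd : 0 < d)
    (hx : ‖x‖ = 1) : x - ecc P d • axisDir P ≠ 0 := fun h0 => by
  have h := one_sub_ecc_mul_rinner_axisDir_pos hP hd hx.le
  rw [← rinner_sub_ecc_smul_axisDir d hx, h0, rinner, inner_zero_right] at h
  exact h.false

theorem rinner_normalVec_nonneg {P x : E3} {d : ℝ} (hP : P ≠ 0) (hd : 0 < d) (hx : ‖x‖ = 1) :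
    0 ≤ rinner x (normalVec P d x) := by
  rw [normalVec, rinner, real_inner_smul_right, ← rinner, rinner_sub_ecc_smul_axisDir d hx]
  exact mul_nonneg (inv_nonneg.2 (norm_nonneg _))
    (one_sub_ecc_mul_rinner_axisDir_pos hP hd hx.le).le

def ellipsoidWeight (P : E3) (d : ℝ) (x : E3) : ℝ :=
  rinner x (normalVec P d x) / polarRadius P d x ^ 2

theorem ellipsoidWeight_nonneg {P x : E3} {d : ℝ} (hP : P ≠ 0) (hd : 0 < d) (hx : ‖x‖ = 1) :
    0 ≤ ellipsoidWeight P d x :=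
  div_nonneg (rinner_normalVec_nonneg hP hd hx) (sq_nonneg _)

theorem continuousOn_ellipsoidWeight {P : E3} {d : ℝ} (hP : P ≠ 0) (hd : 0 < d) :
    ContinuousOn (ellipsoidWeight P d) sphere2 := by
  have hdenom : ∀ x ∈ sphere2, 1 - ecc P d * rinner x (axisDir P) ≠ 0 := fun x hx =>
    (one_sub_ecc_mul_rinner_axisDir_pos hP hd (mem_sphere2_iff.1 hx).le).ne'
  have hnorm : ∀ x ∈ sphere2, ‖x - ecc P d • axisDir P‖ ≠ 0 := fun x hx =>
    norm_ne_zero_iff.2 (sub_ecc_smul_axisDir_ne_zero hP hd (mem_sphere2_iff.1 hx))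
  have hρ : ∀ x ∈ sphere2, polarRadius P d x ^ 2 ≠ 0 := fun x hx =>
    pow_ne_zero _ (polarRadius_pos hP hd (mem_sphere2_iff.1 hx).le).ne'
  unfold ellipsoidWeight normalVec polarRadius rinner
  fun_prop (disch := assumption)

theorem measurable_polarRadius (P : E3) (d : ℝ) : Measurable (polarRadius P d) := by
  unfold polarRadius rinner
  fun_prop

theorem measurable_discRho {N : ℕ} (P : Fin N → E3) (v : Fin N → ℝ) :
    Measurable (discRho P v) :=
  Measurable.iInf fun i => measurable_polarRadius (P i) (v i)

theorem measurableSet_discTracing {N : ℕ} (Ω : Set E3) (P : Fin N → E3) (v : Fin N → ℝ)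
    (I : Set (Fin N)) : MeasurableSet (discTracing Ω P v I) := by
  have h : discTracing Ω P v I =
      closure Ω ∩ ⋃ i ∈ I, {x | discRho P v x = polarRadius (P i) (v i) x} := by
    ext x
    simp [discTracing]
  rw [h]
  exact isClosed_closure.measurableSet.inter <| .biUnion I.to_countable fun i _ =>
    measurableSet_eq_fun (measurable_discRho P v) (measurable_polarRadius (P i) (v i))

theorem hausdorffMeasure_sphere_inter_hyperplane {E : Type*} [NormedAddCommGroup E]
    [InnerProductSpace ℝ E] [MeasurableSpace E] [BorelSpace E] {n : ℕ}
    [Fact (finrank ℝ E = n + 1)] [NeZero n] {u : E} (hu : u ≠ 0) (R c : ℝ) :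
    μH[n] (sphere (0 : E) R ∩ {x | ⟪x, u⟫ = c}) = 0 := by
  have : FiniteDimensional ℝ E := .of_fact_finrank_eq_succ n
  set W := (ℝ ∙ u)ᗮ
  have hW : finrank ℝ W = n := Submodule.finrank_orthogonal_span_singleton hu
  have : Nontrivial W := Module.nontrivial_of_finrank_pos (hW ▸ NeZero.pos n)
  set c₀ : E := (c / ‖u‖ ^ 2) • u
  have hc₀ : ⟪c₀, u⟫ = c := by
    rw [real_inner_smul_left, real_inner_self_eq_norm_sq]
    field_simp [norm_ne_zero_iff.2 hu]
  have hsub : sphere (0 : E) R ∩ {x | ⟪x, u⟫ = c} ⊆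
      (fun y : W => c₀ + (y : E)) '' sphere 0 √(R ^ 2 - ‖c₀‖ ^ 2) := by
    rintro x ⟨hxR, hxu⟩
    have hxW : x - c₀ ∈ W := by
      rw [Submodule.mem_orthogonal_singleton_iff_inner_right, real_inner_comm, inner_sub_left,
        hc₀, hxu, sub_self]
    have hperp : ⟪c₀, x - c₀⟫ = 0 := by
      rw [real_inner_smul_left, real_inner_comm,
        (Submodule.mem_orthogonal_singleton_iff_inner_left).1 hxW, mul_zero]
    have hpyth : ‖x - c₀‖ ^ 2 = R ^ 2 - ‖c₀‖ ^ 2 := by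
      have := norm_add_sq_eq_norm_sq_add_norm_sq_of_inner_eq_zero c₀ (x - c₀) hperp
      rw [add_sub_cancel, mem_sphere_zero_iff_norm.1 hxR] at this
      linarith
    refine ⟨⟨x - c₀, hxW⟩, ?_, add_sub_cancel c₀ x⟩
    rw [mem_sphere_zero_iff_norm, ← hpyth, Real.sqrt_sq (norm_nonneg _)]
    rfl
  have hiso : Isometry fun y : W => c₀ + (y : E) :=
    (isometry_add_left c₀).comp isometry_subtype_coe
  refine measure_mono_null hsub ?_
  rw [hiso.hausdorffMeasure_image (Or.inl n.cast_nonneg), ← hW]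
  exact Measure.addHaar_sphere _ _ _

theorem polarRadius_eq_polarRadius_iff {P₁ P₂ x : E3} {d₁ d₂ : ℝ} (hP₁ : P₁ ≠ 0) (hP₂ : P₂ ≠ 0)
    (hd₁ : 0 < d₁) (hd₂ : 0 < d₂) (hx : ‖x‖ ≤ 1) :
    polarRadius P₁ d₁ x = polarRadius P₂ d₂ x ↔
      rinner x ((d₂ * ecc P₁ d₁) • axisDir P₁ - (d₁ * ecc P₂ d₂) • axisDir P₂) = d₂ - d₁ := by
  rw [polarRadius, polarRadius,
    div_eq_div_iff (one_sub_ecc_mul_rinner_axisDir_pos hP₁ hd₁ hx).ne'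
      (one_sub_ecc_mul_rinner_axisDir_pos hP₂ hd₂ hx).ne']
  simp only [rinner, inner_sub_right, real_inner_smul_right]
  constructor <;> intro h <;> linarith

theorem norm_smul_axisDir {P : E3} (hP : P ≠ 0) : ‖P‖ • axisDir P = P := by
  rw [axisDir, smul_smul, mul_inv_cancel₀ (norm_ne_zero_iff.2 hP), one_smul]

theorem eq_of_ecc_smul_axisDir_eq {P₁ P₂ : E3} {d : ℝ} (hP₁ : P₁ ≠ 0) (hP₂ : P₂ ≠ 0)
    (hd : 0 < d) (h : ecc P₁ d • axisDir P₁ = ecc P₂ d • axisDir P₂) : P₁ = P₂ := by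
  have hecc : ecc P₁ d = ecc P₂ d := by
    simpa [norm_smul, norm_smul_inv_norm, hP₁, hP₂, axisDir, abs_of_pos (ecc_pos _ d)]
      using congrArg norm h
  have haxis : axisDir P₁ = axisDir P₂ := smul_right_injective E3 (ecc_pos P₂ d).ne' (hecc ▸ h)
  have hnorm : ‖P₁‖ = ‖P₂‖ := by
    have h₁ := ecc_sq_add_two_mul_ecc_mul P₁ d
    have h₂ := ecc_sq_add_two_mul_ecc_mul P₂ d
    rw [hecc] at h₁
    have : d / ‖P₁‖ = d / ‖P₂‖ := by nlinarith [ecc_pos P₂ d]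
    rwa [div_eq_div_iff (norm_ne_zero_iff.2 hP₁) (norm_ne_zero_iff.2 hP₂),
      mul_right_inj' hd.ne', eq_comm] at this
  calc P₁ = ‖P₁‖ • axisDir P₁ := (norm_smul_axisDir hP₁).symm
    _ = ‖P₂‖ • axisDir P₂ := by rw [hnorm, haxis]
    _ = P₂ := norm_smul_axisDir hP₂

/-- Two distinct confocal ellipsoids cross the sphere of directions along a plane section. -/
theorem hausdorffMeasure_polarRadius_eq_eq_zero {P₁ P₂ : E3} {d₁ d₂ : ℝ} (hP₁ : P₁ ≠ 0)
    (hP₂ : P₂ ≠ 0) (hne : P₁ ≠ P₂) (hd₁ : 0 < d₁) (hd₂ : 0 < d₂) :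
    μH[2] {x | x ∈ sphere2 ∧ polarRadius P₁ d₁ x = polarRadius P₂ d₂ x} = 0 := by
  set u : E3 := (d₂ * ecc P₁ d₁) • axisDir P₁ - (d₁ * ecc P₂ d₂) • axisDir P₂
  have hsub : {x | x ∈ sphere2 ∧ polarRadius P₁ d₁ x = polarRadius P₂ d₂ x} ⊆
      sphere 0 1 ∩ {x | ⟪x, u⟫ = d₂ - d₁} := fun x ⟨hx, hρ⟩ =>
    ⟨hx, (polarRadius_eq_polarRadius_iff hP₁ hP₂ hd₁ hd₂ (mem_sphere2_iff.1 hx).le).1 hρ⟩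
  refine measure_mono_null hsub ?_
  by_cases hu : u = 0
  · have hd : d₂ - d₁ ≠ 0 := by
      refine sub_ne_zero.2 fun hd => hne ?_
      subst hd
      refine eq_of_ecc_smul_axisDir_eq hP₁ hP₂ hd₁ (smul_right_injective E3 hd₁.ne' ?_)
      simpa [u, smul_sub, smul_smul, sub_eq_zero] using hu
    convert measure_empty (μ := (μH[2] : Measure E3))
    refine eq_empty_of_forall_notMem fun x hx => hd ?_
    rw [← hx.2, hu, inner_zero_right]
  · have : Fact (finrank ℝ E3 = 2 + 1) := ⟨by simp⟩
    simpa using hausdorffMeasure_sphere_inter_hyperplane (n := 2) hu 1 (d₂ - d₁)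

theorem ae_eq_of_polarRadius_eq {N : ℕ} {P : Fin N → E3} (hP : ∀ i, P i ≠ 0)
    (hPinj : Function.Injective P) {v : Fin N → ℝ} (hv : ∀ i, 0 < v i) :
    ∀ᵐ x ∂μH[2], ∀ j k, x ∈ sphere2 →
      polarRadius (P j) (v j) x = polarRadius (P k) (v k) x → j = k := by
  refine ae_all_iff.2 fun j => ae_all_iff.2 fun k => ?_
  rcases eq_or_ne j k with rfl | hjk
  · exact .of_forall fun _ _ _ => rfl
  · filter_upwards [measure_eq_zero_iff_ae_notMem.1 (hausdorffMeasure_polarRadius_eq_eq_zero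
      (hP j) (hP k) (hPinj.ne hjk) (hv j) (hv k))] with x hx hxS hρ
    exact absurd ⟨hxS, hρ⟩ hx

theorem discRho_le {N : ℕ} (P : Fin N → E3) (v : Fin N → ℝ) (x : E3) (i : Fin N) :
    discRho P v x ≤ polarRadius (P i) (v i) x :=
  ciInf_le (Set.finite_range _).bddBelow i

theorem discRho_mono {N : ℕ} (P : Fin N → E3) {v v' : Fin N → ℝ} {x : E3}
    (h : ∀ j, polarRadius (P j) (v' j) x ≤ polarRadius (P j) (v j) x) :
    discRho P v' x ≤ discRho P v x :=
  ciInf_mono (Set.finite_range _).bddBelow h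

theorem discTracing_subset_of_le {N : ℕ} {Ω : Set E3} (P : Fin N → E3) {v v' : Fin N → ℝ}
    {I : Set (Fin N)} (hle : ∀ x ∈ closure Ω, ∀ j, polarRadius (P j) (v' j) x ≤
      polarRadius (P j) (v j) x) (hI : ∀ i ∈ I, v' i = v i) :
    discTracing Ω P v' I ⊆ discTracing Ω P v I := by
  rintro x ⟨hx, i, hi, hρ⟩
  refine ⟨hx, i, hi, le_antisymm (discRho_le P v x i) ?_⟩
  calc polarRadius (P i) (v i) x = discRho P v' x := by rw [hρ, hI i hi]
    _ ≤ discRho P v x := discRho_mono P (hle x hx)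

theorem discNu_eq_normalVec {N : ℕ} {P : Fin N → E3} {v : Fin N → ℝ} {x : E3} {i : Fin N}
    (hi : discRho P v x = polarRadius (P i) (v i) x)
    (huniq : ∀ j, discRho P v x = polarRadius (P j) (v j) x → j = i) :
    discNu P v x = normalVec (P i) (v i) x := by
  have h : ∃ j, discRho P v x = polarRadius (P j) (v j) x := ⟨i, hi⟩
  rw [discNu, dif_pos h, huniq _ h.choose_spec]

theorem discMu_singleton_eq {N : ℕ} {Ω : Set E3} (hΩ : Ω ⊆ sphere2) {P : Fin N → E3}
    (hP : ∀ i, P i ≠ 0) (hPinj : Function.Injective P) {v : Fin N → ℝ} (hv : ∀ i, 0 < v i)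
    (f : E3 → ℝ) (i : Fin N) :
    discMu Ω P v f {i} =
      ∫ x in discTracing Ω P v {i}, f x * ellipsoidWeight (P i) (v i) x ∂μH[2] := by
  refine setIntegral_congr_ae (measurableSet_discTracing Ω P v {i}) ?_
  filter_upwards [ae_eq_of_polarRadius_eq hP hPinj hv] with x hties hx
  obtain ⟨hxΩ, j, rfl, hj⟩ := hx
  have hxS : x ∈ sphere2 := closure_minimal hΩ isClosed_sphere hxΩ
  rw [discNu_eq_normalVec hj fun k hk => hties k j hxS (hk.symm.trans hj), hj, ellipsoidWeight,
    mul_div_assoc]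

theorem discrete_measure_monotone_in_single_focal_parameter_general
    (Ω : Set E3) (hΩ : Ω ⊆ sphere2)
    (N : ℕ) (P : Fin N → E3) (hP : ∀ i, P i ≠ 0) (hPinj : Function.Injective P)
    (w wt : Fin N → ℝ) (hw : ∀ i, 0 < w i) (hwt : ∀ i, 0 < wt i)
    (l : Fin N) (hl : wt l ≤ w l) (hoth : ∀ i, i ≠ l → wt i = w i)
    (f : E3 → ℝ) (hf0 : ∀ x ∈ closure Ω, 0 ≤ f x)
    (hfi : IntegrableOn f (closure Ω) μH[2]) :
    ∀ i, i ≠ l → discMu Ω P wt f {i} ≤ discMu Ω P w f {i} := by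
  intro i hi
  have hΩS : closure Ω ⊆ sphere2 := closure_minimal hΩ isClosed_sphere
  have hle : ∀ x ∈ closure Ω, ∀ j, polarRadius (P j) (wt j) x ≤ polarRadius (P j) (w j) x := by
    intro x hx j
    rcases eq_or_ne j l with rfl | hj
    · exact polarRadius_le_polarRadius (hP j) (hwt j) hl (mem_sphere2_iff.1 (hΩS hx)).le
    · rw [hoth j hj]
  have hsub : discTracing Ω P wt {i} ⊆ discTracing Ω P w {i} :=
    discTracing_subset_of_le P hle fun j hj => hoth j (mem_singleton_iff.1 hj ▸ hi)
  have hint : IntegrableOn (fun x => f x * ellipsoidWeight (P i) (w i) x) (closure Ω) μH[2] :=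
    hfi.mul_continuousOn ((continuousOn_ellipsoidWeight (hP i) (hw i)).mono hΩS)
      ((isCompact_sphere 0 1).of_isClosed_subset isClosed_closure hΩS)
  rw [discMu_singleton_eq hΩ hP hPinj hwt, discMu_singleton_eq hΩ hP hPinj hw, hoth i hi]
  refine setIntegral_mono_set (hint.mono_set fun x hx => hx.1) ?_ hsub.eventuallyLE
  exact ae_restrict_of_forall_mem (measurableSet_discTracing Ω P w {i}) fun x hx =>
    mul_nonneg (hf0 x hx.1) (ellipsoidWeight_nonneg (hP i) (hw i) (mem_sphere2_iff.1 (hΩS hx.1)))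

/-- Monotonicity: decreasing the single entry `d_l` of `w` does not
increase the reflector measure of any other target point `P_i`, `i ≠ l`. -/
theorem discrete_measure_monotone_in_single_focal_parameter
    (Ω : Set E3) (hΩ : Ω ⊆ sphere2) (hfr : μH[2] (sphFrontier Ω) = 0)
    (N : ℕ) (P : Fin N → E3) (hP : ∀ i, P i ≠ 0) (hPinj : Function.Injective P)
    (w wt : Fin N → ℝ) (hw : ∀ i, 0 < w i) (hwt : ∀ i, 0 < wt i)
    (l : Fin N) (hl : wt l ≤ w l) (hoth : ∀ i, i ≠ l → wt i = w i)
    (f : E3 → ℝ) (hf0 : ∀ x ∈ closure Ω, 0 ≤ f x)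
    (hfi : IntegrableOn f (closure Ω) μH[2]) :
    ∀ i, i ≠ l → discMu Ω P wt f {i} ≤ discMu Ω P w f {i} :=
  discrete_measure_monotone_in_single_focal_parameter_general Ω hΩ N P hP hPinj w wt hw hwt l hl
    hoth f hf0 hfi
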